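/- arXiv:2601.03815 — 3 statements merged into one kernel-verified Lean document; each statement's English description precedes it below -/
import Mathlib

section
/- Let S ∈ ℝ^{p×p} be symmetric positive semidefinite with exactly ψ nonzero eigenvalues, all simple: λ_1 > λ_2 > … > λ_ψ > 0, and suppose ψ ≤ n − 1 for a positive integer n. Define, for real x > 0 outside {λ_1,…,λ_ψ}, the function m̄_n(x) = −(1 − c_n)/x + c_n m_n(x), where c_n = p/n and m_n(x) = p⁻¹ ∑_{i=1}^p (λ_i^S − x)⁻¹ is summed over all p eigenvalues of S (including the zero eigenvalues). Then m̄_n has exactly ψ zeros η_1 > η_2 > … > η_ψ in (0, ∞), and they strictly interlace the nonzero eigenvalues: λ_1 > η_1 > λ_2 > η_2 > … > λ_ψ > η_ψ > 0. -/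
open Matrix
open scoped BigOperators

noncomputable section

/-- The Stieltjes transform `m_n(x) = p⁻¹ tr (S − xI)⁻¹` of the empirical spectral
distribution of `S`, at a real point `x` outside the spectrum. -/
def mEsdReal (p : ℕ) (S : Matrix (Fin p) (Fin p) ℝ) (x : ℝ) : ℝ :=
  (p : ℝ)⁻¹ * ((S - x • (1 : Matrix (Fin p) (Fin p) ℝ))⁻¹).trace

/-- The companion transform `m̄_n(x) = −(1−c_n)/x + c_n m_n(x)`, `c_n = p/n`. -/
def mbarReal (p n : ℕ) (S : Matrix (Fin p) (Fin p) ℝ) (x : ℝ) : ℝ :=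
  -(1 - (p : ℝ) / (n : ℝ)) / x + (p : ℝ) / (n : ℝ) * mEsdReal p S x

/-!
Writing `S = ∑ᵢ λᵢ vᵢ vᵢᵀ`, the resolvent `(S - x)⁻¹` acts as `(λᵢ - x)⁻¹` on `vᵢ` and as `-x⁻¹` on
the orthogonal complement of the `vᵢ`, so `n · m̄_n(x) = (n - ψ) / (0 - x) + ∑ᵢ 1 / (λᵢ - x)`.
This is a sum `∑ₖ wₖ / (μₖ - x)` with positive weights over the poles `λ₁ > ⋯ > λ_ψ > 0`; the
weight `n - ψ` of the pole `0` is positive because `ψ < n`. Each term is increasing off its pole,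
so the sum increases strictly from `-∞` to `+∞` between consecutive poles and has exactly one
zero there, while to the right of `λ₁` all terms are negative.
-/

open Set Filter Topology

theorem Fin.exists_mem_Ioo_succ_castSucc {α : Type*} [LinearOrder α] {m : ℕ}
    {μ : Fin (m + 1) → α} {x : α} (h0 : x < μ 0) (hlast : μ (Fin.last m) < x)
    (hne : ∀ k, x ≠ μ k) : ∃ i : Fin m, x ∈ Ioo (μ i.succ) (μ i.castSucc) := by
  classical
  have hbelow : (Finset.univ.filter fun k => μ k < x).Nonempty := ⟨_, by simpa using hlast⟩
  set k := (Finset.univ.filter fun k => μ k < x).min' hbelow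
  have hk : μ k < x := by simpa using Finset.min'_mem _ hbelow
  obtain ⟨i, hik⟩ := Fin.exists_succ_eq_of_ne_zero (x := k) fun h => (h ▸ hk).not_gt h0
  refine ⟨i, hik ▸ hk, lt_of_le_of_ne (not_lt.mp fun h => ?_) (hne _)⟩
  exact (hik ▸ Fin.castSucc_lt_succ (i := i)).not_ge (Finset.min'_le _ _ (by simpa using h))

theorem StrictAnti.fin_snoc {α : Type*} [Preorder α] {n : ℕ} {f : Fin n → α} {a : α}
    (hf : StrictAnti f) (ha : ∀ i, a < f i) : StrictAnti (Fin.snoc f a : Fin (n + 1) → α) := by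
  intro j k hjk
  obtain ⟨j, rfl⟩ := Fin.exists_castSucc_eq.mpr (hjk.trans_le (Fin.le_last k)).ne
  induction k using Fin.lastCases with
  | last => simpa using ha j
  | cast k => simpa using hf (Fin.castSucc_lt_castSucc_iff.mp hjk)

theorem StrictAnti.notMem_Ioo_succ_castSucc {α : Type*} [Preorder α] {m : ℕ}
    {μ : Fin (m + 1) → α} (hμ : StrictAnti μ) (i : Fin m) (k : Fin (m + 1)) :
    μ k ∉ Ioo (μ i.succ) (μ i.castSucc) := fun hk => by
  rcases le_or_gt k i.castSucc with hki | hik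
  · exact (hμ.antitone hki).not_gt hk.2
  · exact (hμ.antitone (Fin.castSucc_lt_iff_succ_le.mp hik)).not_gt hk.1

theorem div_sub_lt_div_sub_of_notMem_Icc {a c x y : ℝ} (ha : 0 < a) (hxy : x < y)
    (hc : c ∉ Icc x y) : a / (c - x) < a / (c - y) := by
  rcases lt_or_gt_of_ne (show c ≠ y by rintro rfl; exact hc ⟨hxy.le, le_rfl⟩) with hcy | hcy
  · have hcx : c < x := not_le.mp fun h => hc ⟨h, hcy.le⟩
    rw [← neg_sub x c, ← neg_sub y c, div_neg, div_neg, neg_lt_neg_iff]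
    exact div_lt_div_of_pos_left ha (by linarith) (by linarith)
  · exact div_lt_div_of_pos_left ha (by linarith) (by linarith)

theorem tendsto_const_sub_nhds_zero {a : ℝ} : Tendsto (fun x => a - x) (𝓝 a) (𝓝 0) := by
  simpa using (tendsto_const_nhds (x := a)).sub (tendsto_id (x := 𝓝 a))

def atomicStieltjes {ι : Type*} [Fintype ι] (w μ : ι → ℝ) (x : ℝ) : ℝ :=
  ∑ i, w i / (μ i - x)

namespace atomicStieltjes

variable {ι : Type*} [Fintype ι] {w μ : ι → ℝ}

theorem continuousOn {s : Set ℝ} (hs : ∀ i, μ i ∉ s) : ContinuousOn (atomicStieltjes w μ) s :=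
  continuousOn_finsetSum _ fun i _ =>
    continuousOn_const.div (continuousOn_const.sub continuousOn_id)
      fun _ hx => sub_ne_zero.mpr fun h => hs i (h ▸ hx)

theorem strictMonoOn [Nonempty ι] (hw : ∀ i, 0 < w i) {s : Set ℝ} (hs : s.OrdConnected)
    (hμ : ∀ i, μ i ∉ s) : StrictMonoOn (atomicStieltjes w μ) s := fun _ hx _ hy hxy =>
  Finset.sum_lt_sum_of_nonempty Finset.univ_nonempty fun i _ =>
    div_sub_lt_div_sub_of_notMem_Icc (hw i) hxy fun h => hμ i (hs.out hx hy h)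

theorem neg_of_lt [Nonempty ι] (hw : ∀ i, 0 < w i) {x : ℝ} (hx : ∀ i, μ i < x) :
    atomicStieltjes w μ x < 0 :=
  Finset.sum_neg (fun i _ => div_neg_of_pos_of_neg (hw i) (sub_neg.mpr (hx i)))
    Finset.univ_nonempty

theorem eq_div_add_sum_erase [DecidableEq ι] (i : ι) (x : ℝ) :
    atomicStieltjes w μ x = w i / (μ i - x) + ∑ j ∈ Finset.univ.erase i, w j / (μ j - x) :=
  (Finset.add_sum_erase _ _ (Finset.mem_univ i)).symm

theorem tendsto_sum_erase [DecidableEq ι] (hμ : Function.Injective μ) (i : ι) :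
    Tendsto (fun x => ∑ j ∈ Finset.univ.erase i, w j / (μ j - x)) (𝓝 (μ i))
      (𝓝 (∑ j ∈ Finset.univ.erase i, w j / (μ j - μ i))) :=
  tendsto_finsetSum _ fun _ hj =>
    tendsto_const_nhds.div (tendsto_const_nhds.sub tendsto_id)
      (sub_ne_zero.mpr (hμ.ne (Finset.ne_of_mem_erase hj)))

theorem tendsto_nhdsLT (hw : ∀ i, 0 < w i) (hμ : Function.Injective μ) (i : ι) :
    Tendsto (atomicStieltjes w μ) (𝓝[<] μ i) atTop := by
  classical
  have hgap : Tendsto (fun x => μ i - x) (𝓝[<] μ i) (𝓝[>] 0) :=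
    tendsto_nhdsWithin_iff.mpr ⟨tendsto_const_sub_nhds_zero.mono_left nhdsWithin_le_nhds,
      eventually_nhdsWithin_of_forall fun x (hx : x < μ i) => sub_pos.mpr hx⟩
  have hpole : Tendsto (fun x => w i / (μ i - x)) (𝓝[<] μ i) atTop := by
    simpa only [div_eq_mul_inv, Function.comp_def] using
      (tendsto_inv_nhdsGT_zero.comp hgap).const_mul_atTop (hw i)
  exact (hpole.atTop_add ((tendsto_sum_erase hμ i).mono_left nhdsWithin_le_nhds)).congr
    fun x => (eq_div_add_sum_erase i x).symm

theorem tendsto_nhdsGT (hw : ∀ i, 0 < w i) (hμ : Function.Injective μ) (i : ι) :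
    Tendsto (atomicStieltjes w μ) (𝓝[>] μ i) atBot := by
  classical
  have hgap : Tendsto (fun x => μ i - x) (𝓝[>] μ i) (𝓝[<] 0) :=
    tendsto_nhdsWithin_iff.mpr ⟨tendsto_const_sub_nhds_zero.mono_left nhdsWithin_le_nhds,
      eventually_nhdsWithin_of_forall fun x (hx : μ i < x) => sub_neg.mpr hx⟩
  have hpole : Tendsto (fun x => w i / (μ i - x)) (𝓝[>] μ i) atBot := by
    simpa only [div_eq_mul_inv, Function.comp_def] using
      (tendsto_inv_nhdsLT_zero.comp hgap).const_mul_atBot (hw i)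
  exact (hpole.atBot_add ((tendsto_sum_erase hμ i).mono_left nhdsWithin_le_nhds)).congr
    fun x => (eq_div_add_sum_erase i x).symm

theorem existsUnique_eq_zero (hw : ∀ i, 0 < w i) (hμ : Function.Injective μ) {i j : ι}
    (hji : μ j < μ i) (hgap : ∀ k, μ k ∉ Ioo (μ j) (μ i)) :
    ∃! x, x ∈ Ioo (μ j) (μ i) ∧ atomicStieltjes w μ x = 0 := by
  have : Nonempty ι := ⟨i⟩
  have := left_nhdsWithin_Ioo_neBot hji
  have := right_nhdsWithin_Ioo_neBot hji
  obtain ⟨x, hx, hx0⟩ := isPreconnected_Ioo.intermediate_value_Iii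
    (l₁ := 𝓝[Ioo (μ j) (μ i)] (μ j)) (l₂ := 𝓝[Ioo (μ j) (μ i)] (μ i)) inf_le_right inf_le_right
    (continuousOn hgap)
    ((tendsto_nhdsGT hw hμ j).mono_left (nhdsWithin_mono _ Ioo_subset_Ioi_self))
    ((tendsto_nhdsLT hw hμ i).mono_left (nhdsWithin_mono _ Ioo_subset_Iio_self))
    (mem_univ 0)
  exact ⟨x, ⟨hx, hx0⟩, fun y hy =>
    (strictMonoOn hw ordConnected_Ioo hgap).injOn hy.1 hx (hy.2.trans hx0.symm)⟩

theorem interlacing {m : ℕ} {w μ : Fin (m + 1) → ℝ} (hw : ∀ i, 0 < w i) (hμ : StrictAnti μ) :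
    ∃ η : Fin m → ℝ, StrictAnti η ∧ (∀ i, η i ∈ Ioo (μ i.succ) (μ i.castSucc)) ∧
      (∀ i, atomicStieltjes w μ (η i) = 0) ∧
      ∀ x, μ (Fin.last m) < x → (∀ k, x ≠ μ k) → atomicStieltjes w μ x = 0 → ∃ i, x = η i := by
  choose η hη hη_unique using fun i : Fin m =>
    existsUnique_eq_zero hw hμ.injective (hμ Fin.castSucc_lt_succ) (hμ.notMem_Ioo_succ_castSucc i)
  refine ⟨η, fun i j hij => ?_, fun i => (hη i).1, fun i => (hη i).2, fun x hx hne hx0 => ?_⟩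
  · calc η j < μ j.castSucc := (hη j).1.2
      _ ≤ μ i.succ := hμ.antitone (Fin.succ_le_castSucc_iff.mpr hij)
      _ < η i := (hη i).1.1
  · have hx_top : x < μ 0 := not_le.mp fun h =>
      (neg_of_lt hw fun k => lt_of_le_of_ne ((hμ.antitone (Fin.zero_le k)).trans h)
        (hne k).symm).ne hx0
    obtain ⟨i, hi⟩ := Fin.exists_mem_Ioo_succ_castSucc hx_top hx hne
    exact ⟨i, hη_unique i x ⟨hi, hx0⟩⟩

end atomicStieltjes

namespace Matrix

theorem vecMulVec_self_mul_vecMulVec_self {K m ι : Type*} [Field K] [Fintype m] [DecidableEq ι]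
    {v : ι → m → K} (hv : ∀ i j, v i ⬝ᵥ v j = if i = j then 1 else 0) (i j : ι) :
    vecMulVec (v i) (v i) * vecMulVec (v j) (v j) = if i = j then vecMulVec (v i) (v i) else 0 := by
  rw [vecMulVec_mul_vecMulVec, hv]
  split_ifs with h <;> simp [h]

variable {K m ι : Type*} [Field K] [DecidableEq m] [Fintype ι]

def spectralMatrix (v : ι → m → K) (a : ι → K) (c : K) : Matrix m m K :=
  ∑ i, a i • vecMulVec (v i) (v i) + c • (1 - ∑ i, vecMulVec (v i) (v i))

variable {v : ι → m → K}

theorem spectralMatrix_one_one : spectralMatrix v 1 1 = 1 := by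
  simp [spectralMatrix]

theorem sum_smul_vecMulVec_sub_smul_one (lam : ι → K) (x : K) :
    ∑ i, lam i • vecMulVec (v i) (v i) - x • 1 = spectralMatrix v (fun i => lam i - x) (-x) := by
  simp only [spectralMatrix, sub_smul, Finset.sum_sub_distrib, ← Finset.smul_sum, neg_smul,
    smul_sub]
  abel

variable [Fintype m] [DecidableEq ι]

theorem sum_smul_vecMulVec_mul_sum_smul_vecMulVec
    (hv : ∀ i j, v i ⬝ᵥ v j = if i = j then 1 else 0) (a b : ι → K) :
    (∑ i, a i • vecMulVec (v i) (v i)) * (∑ j, b j • vecMulVec (v j) (v j)) =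
      ∑ i, (a i * b i) • vecMulVec (v i) (v i) := by
  simp only [Finset.sum_mul_sum, smul_mul_smul, vecMulVec_self_mul_vecMulVec_self hv, smul_ite,
    smul_zero, Finset.sum_ite_eq, Finset.mem_univ, if_true]

theorem spectralMatrix_mul (hv : ∀ i j, v i ⬝ᵥ v j = if i = j then 1 else 0) (a b : ι → K)
    (c d : K) : spectralMatrix v a c * spectralMatrix v b d = spectralMatrix v (a * b) (c * d) := by
  set E : (ι → K) → Matrix m m K := fun a => ∑ i, a i • vecMulVec (v i) (v i)
  have hE (a : ι → K) (c : K) : spectralMatrix v a c = E a + c • (1 - E 1) := by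
    simp [spectralMatrix, E]
  have hEE (a b : ι → K) : E a * E b = E (a * b) :=
    sum_smul_vecMulVec_mul_sum_smul_vecMulVec hv a b
  have hEQ (a : ι → K) : E a * (1 - E 1) = 0 := by rw [mul_sub, hEE, mul_one, mul_one, sub_self]
  have hQE (a : ι → K) : (1 - E 1) * E a = 0 := by rw [sub_mul, hEE, one_mul, one_mul, sub_self]
  have hQQ : (1 - E 1) * (1 - E 1) = 1 - E 1 := by rw [mul_sub, hQE, mul_one, sub_zero]
  simp only [hE, add_mul, mul_add, Matrix.mul_smul, Matrix.smul_mul, hEE, hEQ, hQE, hQQ,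
    smul_zero, add_zero, zero_add, smul_smul, mul_comm d c]

theorem inv_spectralMatrix (hv : ∀ i j, v i ⬝ᵥ v j = if i = j then 1 else 0) {a : ι → K} {c : K}
    (ha : ∀ i, a i ≠ 0) (hc : c ≠ 0) : (spectralMatrix v a c)⁻¹ = spectralMatrix v a⁻¹ c⁻¹ := by
  refine inv_eq_right_inv ?_
  rw [spectralMatrix_mul hv, mul_inv_cancel₀ hc]
  convert spectralMatrix_one_one (v := v)
  ext i
  exact mul_inv_cancel₀ (ha i)

theorem trace_spectralMatrix (hv : ∀ i j, v i ⬝ᵥ v j = if i = j then 1 else 0) (a : ι → K)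
    (c : K) :
    (spectralMatrix v a c).trace = ∑ i, a i + c * (Fintype.card m - Fintype.card ι) := by
  simp [spectralMatrix, trace_sum, hv]

end Matrix

theorem mbarReal_eq_trace (p n : ℕ) (S : Matrix (Fin p) (Fin p) ℝ) (x : ℝ) :
    mbarReal p n S x = -(1 - (p : ℝ) / n) / x + (n : ℝ)⁻¹ * ((S - x • 1)⁻¹).trace := by
  rcases eq_or_ne p 0 with rfl | hp
  · simp [mbarReal, mEsdReal]
  · have : (p : ℝ) ≠ 0 := Nat.cast_ne_zero.mpr hp
    simp only [mbarReal, mEsdReal]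
    field_simp

theorem mbarReal_eq_atomicStieltjes {p : ℕ} {n ψ : ℕ} (hn : n ≠ 0) {S : Matrix (Fin p) (Fin p) ℝ}
    {lam : Fin ψ → ℝ} {v : Fin ψ → Fin p → ℝ}
    (hortho : ∀ i j, v i ⬝ᵥ v j = if i = j then (1 : ℝ) else 0)
    (hdecomp : S = ∑ i, lam i • vecMulVec (v i) (v i)) {x : ℝ} (hx : x ≠ 0)
    (hxl : ∀ i, x ≠ lam i) :
    mbarReal p n S x =
      (n : ℝ)⁻¹ * atomicStieltjes (Fin.snoc (fun _ => 1) ((n : ℝ) - ψ)) (Fin.snoc lam 0) x := by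
  have hlx : ∀ i, lam i - x ≠ 0 := fun i => sub_ne_zero.mpr (hxl i).symm
  rw [mbarReal_eq_trace, hdecomp, sum_smul_vecMulVec_sub_smul_one,
    inv_spectralMatrix hortho hlx (neg_ne_zero.mpr hx), trace_spectralMatrix hortho]
  have : (n : ℝ) ≠ 0 := Nat.cast_ne_zero.mpr hn
  simp only [atomicStieltjes, Fin.sum_univ_castSucc, Fin.snoc_castSucc, Fin.snoc_last,
    Fintype.card_fin, Pi.inv_apply, one_div, zero_sub]
  field_simp
  ring

/-- interlacing of the zeros of the companion Stieltjes transform.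
Let `S ∈ ℝ^{p×p}` be symmetric positive semidefinite with exactly `ψ` nonzero
eigenvalues, all simple, `λ_1 > … > λ_ψ > 0` (encoded by the spectral decomposition
`S = ∑_{i<ψ} λ_i v_i v_iᵀ` with orthonormal `v_i` and strictly decreasing positive `λ`),
and let `ψ ≤ n − 1` for a positive integer `n`.  Then `m̄_n` has exactly `ψ` zeros
`η_1 > … > η_ψ` in `(0,∞)`, strictly interlacing the nonzero eigenvalues:
`λ_1 > η_1 > λ_2 > η_2 > … > λ_ψ > η_ψ > 0`. -/
theorem stmt11 {p : ℕ} (n ψ : ℕ) (hn : 0 < n) (hψn : ψ ≤ n - 1)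
    (S : Matrix (Fin p) (Fin p) ℝ)
    (lam : Fin ψ → ℝ) (v : Fin ψ → Fin p → ℝ)
    (hortho : ∀ i j, v i ⬝ᵥ v j = if i = j then (1 : ℝ) else 0)
    (hpos : ∀ i, 0 < lam i) (hanti : StrictAnti lam)
    (hdecomp : S = ∑ i, lam i • vecMulVec (v i) (v i)) :
    ∃ η : Fin ψ → ℝ,
      StrictAnti η ∧ (∀ i, 0 < η i) ∧ (∀ i, η i < lam i) ∧
      (∀ i : Fin ψ, ∀ h : (i : ℕ) + 1 < ψ, lam ⟨(i : ℕ) + 1, h⟩ < η i) ∧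
      (∀ i, mbarReal p n S (η i) = 0) ∧
      (∀ x : ℝ, 0 < x → (∀ i, x ≠ lam i) → mbarReal p n S x = 0 → ∃ i, x = η i) := by
  set w : Fin (ψ + 1) → ℝ := Fin.snoc (fun _ => 1) ((n : ℝ) - ψ)
  set μ : Fin (ψ + 1) → ℝ := Fin.snoc lam 0
  have hw : ∀ k, 0 < w k := Fin.lastCases
    (by simpa [w] using (by exact_mod_cast (by omega : ψ < n) : (ψ : ℝ) < n))
    fun _ => by simp [w]
  have hμ : StrictAnti μ := hanti.fin_snoc hpos
  have hμ_lam (i : Fin ψ) : μ i.castSucc = lam i := Fin.snoc_castSucc ..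
  obtain ⟨η, hη_anti, hη, hη_zero, hη_unique⟩ := atomicStieltjes.interlacing hw hμ
  have hη_pos (i : Fin ψ) : 0 < η i :=
    ((hμ.antitone (Fin.le_last _)).trans_lt (hη i).1).trans_eq' (Fin.snoc_last ..)
  have hη_lam (i j : Fin ψ) : η i ≠ lam j := fun h =>
    hμ.notMem_Ioo_succ_castSucc i j.castSucc (by rw [hμ_lam j, ← h]; exact hη i)
  refine ⟨η, hη_anti, hη_pos, fun i => hμ_lam i ▸ (hη i).2,
    fun i h => hμ_lam ⟨i + 1, h⟩ ▸ (hη i).1, fun i => ?_, fun x hx hxl hx0 => ?_⟩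
  · rw [mbarReal_eq_atomicStieltjes hn.ne' hortho hdecomp (hη_pos i).ne' (hη_lam i), hη_zero,
      mul_zero]
  · rw [mbarReal_eq_atomicStieltjes hn.ne' hortho hdecomp hx.ne' hxl] at hx0
    refine hη_unique x (by simpa [μ] using hx) (Fin.lastCases ?_ fun i => hμ_lam i ▸ hxl i)
      ((mul_eq_zero.mp hx0).resolve_left (by simpa using hn.ne'))
    simpa [μ] using hx.ne'
end
end

section
/- Let S ∈ ℝ^{p×p} be symmetric positive semidefinite with exactly ψ simple nonzero eigenvalues λ_1 > … > λ_ψ > 0 and corresponding orthonormal eigenvectors v_1,…,v_ψ, with ψ ≤ n − 1 for a positive integer n, let a ∈ ℝ^p, and define s_n, m_n, m̄_n as the Stieltjes transforms associated with S. Fix an index i ∈ {1,…,ψ} and an integer j ≥ 1, and set f_{jn}(z) = z s_n(z) m̄_n′(z)/m̄_n(z)^{j+1}. Then for all sufficiently small ε > 0, (2πi)⁻¹ ∮_{|z−λ_i|=ε} f_{jn}(z) dz = −n λ_i (aᵀv_i)² if j = 1, and the integral equals 0 for every j ≥ 2 (i.e., f_{jn} extends analytically across λ_i when j ≥ 2).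 -/
/-!
By the spectral decomposition, `(S − z)⁻¹ = ∑ₖ (λₖ − z)⁻¹ vₖvₖᵀ + (0 − z)⁻¹ (I − ∑ₖ vₖvₖᵀ)`, so
near `λᵢ` we have `s_n = α/(λᵢ − z) + r` and `m̄_n = β/(λᵢ − z) + q` with `α = (aᵀvᵢ)²`,
`β = 1/n` and `r`, `q` holomorphic. With `w = λᵢ − z` the integrand is `(z − λᵢ)⁻¹ G(z)`, where
`G = −z (α + w r)(β + w² q′) w^{j−1} / (β + w q)^{j+1}` is holomorphic near `λᵢ`. Cauchy's
integral formula gives `G(λᵢ)`, which is `−λᵢ α / β = −n λᵢ (aᵀvᵢ)²` for `j = 1` and `0` for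
`j ≥ 2`.
-/

open Matrix Filter Topology
open scoped BigOperators

noncomputable section

/-- Complex resolvent `(S − zI)⁻¹` of a real matrix. -/
def resolventC (p : ℕ) (S : Matrix (Fin p) (Fin p) ℝ) (z : ℂ) :
    Matrix (Fin p) (Fin p) ℂ :=
  (S.map (fun x => (x : ℂ)) - z • 1)⁻¹

/-- Stieltjes transform of the ESD of `S`: `m_n(z) = p⁻¹ tr (S − zI)⁻¹`. -/
def mEsd (p : ℕ) (S : Matrix (Fin p) (Fin p) ℝ) (z : ℂ) : ℂ :=
  (p : ℂ)⁻¹ * (resolventC p S z).trace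

/-- Stieltjes transform of the VESD of `S` relative to `a`: `s_n(z) = aᵀ(S − zI)⁻¹a`. -/
def sVesd (p : ℕ) (S : Matrix (Fin p) (Fin p) ℝ) (a : Fin p → ℝ) (z : ℂ) : ℂ :=
  (fun i => (a i : ℂ)) ⬝ᵥ (resolventC p S z *ᵥ fun i => (a i : ℂ))

/-- Companion Stieltjes transform `m̄_n(z) = −(1−c_n)/z + c_n m_n(z)`, `c_n = p/n`. -/
def mbarC (p n : ℕ) (S : Matrix (Fin p) (Fin p) ℝ) (z : ℂ) : ℂ :=
  -(1 - (p : ℂ) / (n : ℂ)) / z + (p : ℂ) / (n : ℂ) * mEsd p S z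

theorem OrthogonalIdempotents.sum_smul_mul_sum_smul {K R ι : Type*} [CommSemiring K]
    [Semiring R] [Algebra K R] [Fintype ι] {e : ι → R} (he : OrthogonalIdempotents e)
    (c d : ι → K) :
    (∑ i, c i • e i) * (∑ i, d i • e i) = ∑ i, (c i * d i) • e i := by
  classical
  simp [Finset.sum_mul, Finset.mul_sum, he.mul_eq, smul_smul, mul_comm (d _)]

theorem CompleteOrthogonalIdempotents.inv_sum_smul {K n ι : Type*} [Field K] [Fintype n]
    [DecidableEq n] [Fintype ι] {e : ι → Matrix n n K} (he : CompleteOrthogonalIdempotents e)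
    {c : ι → K} (hc : ∀ i, c i ≠ 0) :
    (∑ i, c i • e i)⁻¹ = ∑ i, (c i)⁻¹ • e i := by
  refine Matrix.inv_eq_right_inv ?_
  simp [he.sum_smul_mul_sum_smul, mul_inv_cancel₀ (hc _), he.complete]

theorem orthogonalIdempotents_vecMulVec_self {R n ι : Type*} [CommSemiring R] [Fintype n]
    [DecidableEq n] [DecidableEq ι] {v : ι → n → R}
    (hv : ∀ i j, v i ⬝ᵥ v j = if i = j then 1 else 0) :
    OrthogonalIdempotents fun i => vecMulVec (v i) (v i) := by
  rw [OrthogonalIdempotents.iff_mul_eq]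
  intro i j
  rw [vecMulVec_mul_vecMulVec, hv]
  split_ifs with h <;> simp [h]

theorem ofReal_dotProduct_ofReal {n : Type*} [Fintype n] (x y : n → ℝ) :
    ((fun t => (x t : ℂ)) ⬝ᵥ fun t => (y t : ℂ)) = ((x ⬝ᵥ y : ℝ) : ℂ) :=
  (Complex.ofRealHom.map_dotProduct x y).symm

theorem hasDerivAt_div_sub {c β z : ℂ} (hz : z ≠ c) :
    HasDerivAt (fun w => β / (c - w)) (β / (c - z) ^ 2) z :=
  ((hasDerivAt_const z β).div ((hasDerivAt_id' z).const_sub c)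
    (sub_ne_zero.2 hz.symm)).congr_deriv (by ring)

theorem differentiableOn_sum_div_sub {ι : Type*} (s : Finset ι) (β μ : ι → ℂ) :
    DifferentiableOn ℂ (fun z => ∑ o ∈ s, β o / (μ o - z)) (μ '' s)ᶜ := by
  intro z hz
  refine DifferentiableAt.differentiableWithinAt (DifferentiableAt.fun_sum fun o ho => ?_)
  exact (differentiableAt_const _).div ((differentiableAt_const _).sub differentiableAt_id)
    (sub_ne_zero.2 fun h => hz ⟨o, ho, h⟩)

theorem mul_div_pow_eq_neg_inv_mul {z w α β r q d : ℂ} (k : ℕ) (hw : w ≠ 0)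
    (hB : β + w * q ≠ 0) :
    z * (α / w + r) * (β / w ^ 2 + d) / (β / w + q) ^ (k + 2) =
      (-w)⁻¹ * -(z * (α + w * r) * (β + w ^ 2 * d) * w ^ k / (β + w * q) ^ (k + 2)) := by
  rw [div_add' _ _ _ hw, div_add' _ _ _ (pow_ne_zero 2 hw), div_add' _ _ _ hw, div_pow]
  field_simp
  ring

theorem circleIntegral_eq_of_eq_sub_inv_smul {f G : ℂ → ℂ} {c : ℂ} {δ ε : ℝ}
    (hG : DifferentiableOn ℂ G (Metric.ball c δ))
    (hf : ∀ z ∈ Metric.ball c δ, z ≠ c → f z = (z - c)⁻¹ • G z) (hε : 0 < ε) (hεδ : ε < δ) :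
    (2 * (Real.pi : ℂ) * Complex.I)⁻¹ * (∮ z in C(c, ε), f z) = G c := by
  have hcl : Metric.closedBall c ε ⊆ Metric.ball c δ := Metric.closedBall_subset_ball hεδ
  rw [circleIntegral.integral_congr hε.le fun z hz =>
    hf z (hcl (Metric.sphere_subset_closedBall hz)) (Metric.ne_of_mem_sphere hz hε.ne'),
    ← smul_eq_mul]
  exact ((hG.mono hcl).mono Metric.closure_ball_subset_closedBall).diffContOnCl
    |>.two_pi_i_inv_smul_circleIntegral_sub_inv_smul (Metric.mem_ball_self hε)

theorem circleIntegral_mul_deriv_div_pow_of_simple_poles {s m r q : ℂ → ℂ} {U : Set ℂ}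
    {c α β : ℂ} (hU : IsOpen U) (hc : c ∈ U) (hr : DifferentiableOn ℂ r U)
    (hq : DifferentiableOn ℂ q U) (hβ : β ≠ 0)
    (hs : ∀ z ∈ U, z ≠ c → s z = α / (c - z) + r z)
    (hm : ∀ z ∈ U, z ≠ c → m z = β / (c - z) + q z) (j : ℕ) (hj : 1 ≤ j) :
    ∃ ε₀ > (0 : ℝ), ∀ ε : ℝ, 0 < ε → ε < ε₀ →
      (2 * (Real.pi : ℂ) * Complex.I)⁻¹ *
          (∮ z in C(c, ε), z * s z * deriv m z / m z ^ (j + 1)) =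
        if j = 1 then -c * α / β else 0 := by
  obtain ⟨k, rfl⟩ : ∃ k, j = k + 1 := ⟨j - 1, by omega⟩
  set B : ℂ → ℂ := fun z => β + (c - z) * q z
  have hBc : ContinuousAt B c :=
    continuousAt_const.add ((continuousAt_const.sub continuousAt_id).mul
      (hq.continuousOn.continuousAt (hU.mem_nhds hc)))
  obtain ⟨ε₀, hε₀, hball⟩ : ∃ ε₀ > (0 : ℝ), Metric.ball c ε₀ ⊆ U ∩ {z | B z ≠ 0} :=
    Metric.mem_nhds_iff.1 (inter_mem (hU.mem_nhds hc) (hBc.eventually_ne (by simpa [B] using hβ)))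
  set G : ℂ → ℂ := fun z => -(z * (α + (c - z) * r z) * (β + (c - z) ^ 2 * deriv q z) *
    (c - z) ^ k / B z ^ (k + 2))
  have hG : DifferentiableOn ℂ G (Metric.ball c ε₀) := by
    have hr' := hr.mono fun z hz => (hball hz).1
    have hq' := hq.mono fun z hz => (hball hz).1
    have hdq := (hq.deriv hU).mono fun z hz => (hball hz).1
    exact (DifferentiableOn.div (by fun_prop) (by fun_prop)
      fun z hz => pow_ne_zero _ (hball hz).2).neg
  have hfG : ∀ z ∈ Metric.ball c ε₀, z ≠ c →
      z * s z * deriv m z / m z ^ (k + 1 + 1) = (z - c)⁻¹ • G z := by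
    intro z hz hzc
    have hmz : m =ᶠ[𝓝 z] fun w => β / (c - w) + q w :=
      Filter.eventually_of_mem ((hU.sdiff isClosed_singleton).mem_nhds ⟨(hball hz).1, hzc⟩)
        fun w hw => hm w hw.1 hw.2
    have hderiv : deriv m z = β / (c - z) ^ 2 + deriv q z := by
      rw [hmz.deriv_eq]
      exact ((hasDerivAt_div_sub hzc).add
        (hq.differentiableAt (hU.mem_nhds (hball hz).1)).hasDerivAt).deriv
    rw [hs z (hball hz).1 hzc, hm z (hball hz).1 hzc, hderiv, smul_eq_mul,
      show z - c = -(c - z) by ring]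
    exact mul_div_pow_eq_neg_inv_mul k (sub_ne_zero.2 hzc.symm) (hball hz).2
  refine ⟨ε₀, hε₀, fun ε hε hεε₀ => ?_⟩
  rw [circleIntegral_eq_of_eq_sub_inv_smul hG hfG hε hεε₀]
  rcases k with _ | k
  · rw [if_pos rfl]
    simp only [G, B, sub_self]
    field_simp
    ring
  · simp [G]

section Spectral

variable {p ψ : ℕ}

-- The index `none` stands for the kernel of `S`: pole `0`, projection `1 - ∑ₖ vₖvₖᵀ`.
def spectralPole (lam : Fin ψ → ℝ) (o : Option (Fin ψ)) : ℂ :=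
  o.elim 0 fun k => (lam k : ℂ)

def spectralProj (v : Fin ψ → Fin p → ℝ) (o : Option (Fin ψ)) : Matrix (Fin p) (Fin p) ℂ :=
  o.elim (1 - ∑ k, vecMulVec (fun t => (v k t : ℂ)) fun t => (v k t : ℂ))
    fun k => vecMulVec (fun t => (v k t : ℂ)) fun t => (v k t : ℂ)

theorem spectralPole_some (lam : Fin ψ → ℝ) (k : Fin ψ) : spectralPole lam (some k) = lam k :=
  rfl

theorem spectralProj_some (v : Fin ψ → Fin p → ℝ) (k : Fin ψ) :
    spectralProj v (some k) = vecMulVec (fun t => (v k t : ℂ)) fun t => (v k t : ℂ) :=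
  rfl

theorem completeOrthogonalIdempotents_spectralProj {v : Fin ψ → Fin p → ℝ}
    (hortho : ∀ i j, v i ⬝ᵥ v j = if i = j then (1 : ℝ) else 0) :
    CompleteOrthogonalIdempotents (spectralProj v) := by
  refine CompleteOrthogonalIdempotents.option (orthogonalIdempotents_vecMulVec_self fun i j => ?_)
  rw [ofReal_dotProduct_ofReal, hortho]
  split_ifs <;> simp

theorem map_ofReal_sub_smul_one_eq_sum {S : Matrix (Fin p) (Fin p) ℝ} {lam : Fin ψ → ℝ}
    {v : Fin ψ → Fin p → ℝ} (hdecomp : S = ∑ i, lam i • vecMulVec (v i) (v i)) (z : ℂ) :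
    S.map (fun x => (x : ℂ)) - z • 1 = ∑ o, (spectralPole lam o - z) • spectralProj v o := by
  subst hdecomp
  rw [Fintype.sum_option]
  ext a b
  simp only [Matrix.sub_apply, map_apply, Matrix.sum_apply, Matrix.smul_apply, vecMulVec_apply,
    smul_eq_mul, Complex.ofReal_sum, Complex.ofReal_mul, Matrix.one_apply, mul_ite, mul_one,
    mul_zero, spectralPole, Option.elim_none, zero_sub, spectralProj, neg_smul, Option.elim_some,
    Matrix.add_apply, Matrix.neg_apply, sub_mul, Finset.sum_sub_distrib, ← Finset.mul_sum]
  split_ifs <;> ring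

theorem resolventC_eq_sum {S : Matrix (Fin p) (Fin p) ℝ} {lam : Fin ψ → ℝ}
    {v : Fin ψ → Fin p → ℝ} (hortho : ∀ i j, v i ⬝ᵥ v j = if i = j then (1 : ℝ) else 0)
    (hdecomp : S = ∑ i, lam i • vecMulVec (v i) (v i)) {z : ℂ}
    (hz : ∀ o, z ≠ spectralPole lam o) :
    resolventC p S z = ∑ o, (spectralPole lam o - z)⁻¹ • spectralProj v o := by
  rw [resolventC, map_ofReal_sub_smul_one_eq_sum hdecomp,
    (completeOrthogonalIdempotents_spectralProj hortho).inv_sum_smul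
      fun o => sub_ne_zero.2 (hz o).symm]

theorem spectralProj_some_mulVec {v : Fin ψ → Fin p → ℝ} (k : Fin ψ) (a : Fin p → ℝ) :
    ((fun t => (a t : ℂ)) ⬝ᵥ (spectralProj v (some k) *ᵥ fun t => (a t : ℂ))) =
      ((a ⬝ᵥ v k : ℝ) : ℂ) ^ 2 := by
  rw [spectralProj_some, dotProduct_mulVec, vecMul_vecMulVec, smul_dotProduct,
    ofReal_dotProduct_ofReal, ofReal_dotProduct_ofReal, dotProduct_comm (v k), smul_eq_mul, sq]

theorem trace_spectralProj_some {v : Fin ψ → Fin p → ℝ}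
    (hortho : ∀ i j, v i ⬝ᵥ v j = if i = j then (1 : ℝ) else 0) (k : Fin ψ) :
    (spectralProj v (some k)).trace = 1 := by
  rw [spectralProj_some, trace_vecMulVec, ofReal_dotProduct_ofReal, hortho, if_pos rfl,
    Complex.ofReal_one]

theorem sVesd_eq_add {S : Matrix (Fin p) (Fin p) ℝ} {lam : Fin ψ → ℝ}
    {v : Fin ψ → Fin p → ℝ} (hortho : ∀ i j, v i ⬝ᵥ v j = if i = j then (1 : ℝ) else 0)
    (hdecomp : S = ∑ i, lam i • vecMulVec (v i) (v i)) (a : Fin p → ℝ) (k : Fin ψ) {z : ℂ}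
    (hz : ∀ o, z ≠ spectralPole lam o) :
    sVesd p S a z = ((a ⬝ᵥ v k : ℝ) : ℂ) ^ 2 / ((lam k : ℂ) - z) +
      ∑ o ∈ Finset.univ.erase (some k),
        ((fun t => (a t : ℂ)) ⬝ᵥ (spectralProj v o *ᵥ fun t => (a t : ℂ))) /
          (spectralPole lam o - z) := by
  rw [sVesd, resolventC_eq_sum hortho hdecomp hz, sum_mulVec, dotProduct_sum,
    ← Finset.add_sum_erase _ _ (Finset.mem_univ (some k))]
  simp only [smul_mulVec, dotProduct_smul, smul_eq_mul, inv_mul_eq_div]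
  rw [spectralProj_some_mulVec, spectralPole_some]

theorem mbarC_eq_add {S : Matrix (Fin p) (Fin p) ℝ} {lam : Fin ψ → ℝ}
    {v : Fin ψ → Fin p → ℝ} (hortho : ∀ i j, v i ⬝ᵥ v j = if i = j then (1 : ℝ) else 0)
    (hdecomp : S = ∑ i, lam i • vecMulVec (v i) (v i)) (n : ℕ) (hp : p ≠ 0) (k : Fin ψ) {z : ℂ}
    (hz : ∀ o, z ≠ spectralPole lam o) :
    mbarC p n S z = (n : ℂ)⁻¹ / ((lam k : ℂ) - z) +
      (-(1 - (p : ℂ) / n) / z + (n : ℂ)⁻¹ * ∑ o ∈ Finset.univ.erase (some k),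
        (spectralProj v o).trace / (spectralPole lam o - z)) := by
  have hc (x : ℂ) : (p : ℂ) / n * ((p : ℂ)⁻¹ * x) = (n : ℂ)⁻¹ * x := by
    field_simp [Nat.cast_ne_zero.2 hp]
  rw [mbarC, mEsd, hc, resolventC_eq_sum hortho hdecomp hz, trace_sum,
    ← Finset.add_sum_erase _ _ (Finset.mem_univ (some k))]
  simp only [trace_smul, smul_eq_mul, inv_mul_eq_div, trace_spectralProj_some hortho,
    spectralPole_some]
  ring

theorem spectralPole_injective {lam : Fin ψ → ℝ} (hpos : ∀ i, 0 < lam i)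
    (hanti : StrictAnti lam) : Function.Injective (spectralPole lam) := by
  rintro (_ | k) (_ | l) h <;>
    simp only [spectralPole, Option.elim_none, Option.elim_some, Complex.ofReal_inj] at h
  · rfl
  · exact absurd (Complex.ofReal_eq_zero.1 h.symm) (hpos l).ne'
  · exact absurd (Complex.ofReal_eq_zero.1 h) (hpos k).ne'
  · rw [hanti.injective h]

end Spectral

theorem stmt13_general {p : ℕ} (n ψ : ℕ) (hn : 0 < n)
    (S : Matrix (Fin p) (Fin p) ℝ)
    (lam : Fin ψ → ℝ) (v : Fin ψ → Fin p → ℝ)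
    (hortho : ∀ i j, v i ⬝ᵥ v j = if i = j then (1 : ℝ) else 0)
    (hpos : ∀ i, 0 < lam i) (hanti : StrictAnti lam)
    (hdecomp : S = ∑ i, lam i • vecMulVec (v i) (v i))
    (a : Fin p → ℝ)
    (i : Fin ψ) (j : ℕ) (hj : 1 ≤ j) :
    ∃ ε₀ > (0 : ℝ), ∀ ε : ℝ, 0 < ε → ε < ε₀ →
      (2 * (Real.pi : ℂ) * Complex.I)⁻¹ *
          (∮ z in C(((lam i : ℝ) : ℂ), ε),
            z * sVesd p S a z * deriv (mbarC p n S) z / (mbarC p n S z) ^ (j + 1)) =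
        if j = 1 then -(n : ℂ) * ((lam i : ℝ) : ℂ) * ((a ⬝ᵥ v i : ℝ) : ℂ) ^ 2 else 0 := by
  have hp : p ≠ 0 := by
    rintro rfl
    simpa using hortho i i
  set U : Set ℂ := (spectralPole lam '' ↑(Finset.univ.erase (some i)))ᶜ
  have hpoles : ∀ z ∈ U, z ≠ lam i → ∀ o, z ≠ spectralPole lam o := by
    rintro z hz hzi o rfl
    by_cases ho : o = some i
    · exact hzi (by rw [ho, spectralPole_some])
    · exact hz ⟨o, Finset.mem_erase.2 ⟨ho, Finset.mem_univ o⟩, rfl⟩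
  have hcU : ((lam i : ℝ) : ℂ) ∈ U := fun ⟨o, ho, h⟩ =>
    (Finset.mem_erase.1 ho).1 (spectralPole_injective hpos hanti h)
  have hU0 : ∀ z ∈ U, z ≠ 0 := fun z hz h0 =>
    hz ⟨none, Finset.mem_erase.2 ⟨Option.some_ne_none i |>.symm, Finset.mem_univ _⟩, h0.symm⟩
  obtain ⟨ε₀, hε₀, hres⟩ := circleIntegral_mul_deriv_div_pow_of_simple_poles
    ((Finset.finite_toSet _).image _).isClosed.isOpen_compl hcU
    (differentiableOn_sum_div_sub _ _ _)
    (((differentiableOn_const _).div differentiableOn_id hU0).add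
      ((differentiableOn_sum_div_sub _ _ _).const_mul _))
    (inv_ne_zero (Nat.cast_ne_zero.2 hn.ne'))
    (fun z hz hzi => sVesd_eq_add hortho hdecomp a i (hpoles z hz hzi))
    (fun z hz hzi => mbarC_eq_add hortho hdecomp n hp i (hpoles z hz hzi)) j hj
  refine ⟨ε₀, hε₀, fun ε hε hεε₀ => ?_⟩
  rw [hres ε hε hεε₀]
  split_ifs <;> field_simp

/-- residues of `f_{jn}(z) = z s_n(z) m̄_n′(z)/m̄_n(z)^{j+1}` at a
simple nonzero eigenvalue `λ_i` of `S`.  For all sufficiently small `ε > 0`,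
`(2πi)⁻¹ ∮_{|z−λ_i|=ε} f_{jn}(z) dz = −n λ_i (aᵀv_i)²` if `j = 1`, and the integral
vanishes for every `j ≥ 2`. -/
theorem stmt13 {p : ℕ} (n ψ : ℕ) (hn : 0 < n) (hψn : ψ ≤ n - 1)
    (S : Matrix (Fin p) (Fin p) ℝ)
    (lam : Fin ψ → ℝ) (v : Fin ψ → Fin p → ℝ)
    (hortho : ∀ i j, v i ⬝ᵥ v j = if i = j then (1 : ℝ) else 0)
    (hpos : ∀ i, 0 < lam i) (hanti : StrictAnti lam)
    (hdecomp : S = ∑ i, lam i • vecMulVec (v i) (v i))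
    (a : Fin p → ℝ)
    (i : Fin ψ) (j : ℕ) (hj : 1 ≤ j) :
    ∃ ε₀ > (0 : ℝ), ∀ ε : ℝ, 0 < ε → ε < ε₀ →
      (2 * (Real.pi : ℂ) * Complex.I)⁻¹ *
          (∮ z in C(((lam i : ℝ) : ℂ), ε),
            z * sVesd p S a z * deriv (mbarC p n S) z / (mbarC p n S z) ^ (j + 1)) =
        if j = 1 then -(n : ℂ) * ((lam i : ℝ) : ℂ) * ((a ⬝ᵥ v i : ℝ) : ℂ) ^ 2 else 0 :=
  stmt13_general n ψ hn S lam v hortho hpos hanti hdecomp a i j hj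
end
end

section
/- Let n, p be positive integers, X ∈ ℝ^{p×n}, y ∈ ℝ^n, and P₁ = I_n − n⁻¹ 𝟙_n 𝟙_nᵀ the centering projection. Suppose rank(X P₁) = n − 1 (which requires p ≥ n − 1, e.g., when p > n and the data are in general position) and yᵀP₁y ≠ 0. Then for any matrix G ∈ ℝ^{p×p} satisfying the four Moore–Penrose conditions for A = X P₁ Xᵀ (namely AGA = A, GAG = G, (AG)ᵀ = AG, (GA)ᵀ = GA), the coefficient of determination degenerates to one: yᵀ P₁ Xᵀ G X P₁ y / (yᵀ P₁ y) = 1. -/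
/-!
Write `A = X P₁ Xᵀ`. Since `P₁ Xᵀ` has rank `rank(X P₁) = n - 1 = rank P₁` and its range lies in
that of `P₁`, the two ranges agree, so `P₁ y = P₁ Xᵀ z` for some `z`. Then `X P₁ y = A z`, and any
`G` with `A G A = A` gives `(A z)ᵀ G (A z) = zᵀ A z = (P₁ Xᵀ z)ᵀ (Xᵀ z) = yᵀ P₁ y`.
-/

open Matrix
open scoped BigOperators

noncomputable section

/-- The centering projection `P₁ = I_n − n⁻¹ 𝟙𝟙ᵀ`. -/
def centeringProj (n : ℕ) : Matrix (Fin n) (Fin n) ℝ :=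
  1 - (n : ℝ)⁻¹ • vecMulVec (fun _ => (1 : ℝ)) (fun _ => (1 : ℝ))

namespace Matrix

variable {m n : Type*} [Fintype m] [Fintype n]

theorem range_mulVecLin_mul_eq_of_rank_le {K : Type*} [Field K] {N : Matrix m m K}
    {M : Matrix m n K} (h : N.rank ≤ (N * M).rank) :
    LinearMap.range (N * M).mulVecLin = LinearMap.range N.mulVecLin := by
  refine Submodule.eq_of_le_of_finrank_le ?_ h
  rw [mulVecLin_mul]
  exact LinearMap.range_comp_le_range _ _

theorem dotProduct_mulVec_mul_mul_self {R : Type*} [CommRing R] {A G : Matrix n n R}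
    (hAGA : A * G * A = A) (z : n → R) :
    (z ᵥ* A) ⬝ᵥ (G *ᵥ (A *ᵥ z)) = z ⬝ᵥ (A *ᵥ z) := by
  rw [← dotProduct_mulVec, mulVec_mulVec, mulVec_mulVec, hAGA]

theorem rank_le_card_sub_one_of_mulVec_eq_zero {K : Type*} [Field K]
    {A : Matrix n n K} {v : n → K} (hv : v ≠ 0) (hAv : A *ᵥ v = 0) :
    A.rank ≤ Fintype.card n - 1 := by
  have hker : 1 ≤ Module.finrank K (LinearMap.ker A.mulVecLin) :=
    Submodule.one_le_finrank_iff.mpr fun h ↦ hv <| by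
      rw [← Submodule.mem_bot K, ← h, LinearMap.mem_ker, mulVecLin_apply, hAv]
  have := LinearMap.finrank_range_add_finrank_ker A.mulVecLin
  rw [Module.finrank_fintype_fun_eq_card] at this
  unfold rank
  omega

theorem dotProduct_mulVec_generalizedInverse_eq {p : Type*} [Fintype p] {P : Matrix n n ℝ}
    (hP : Pᵀ = P) {X : Matrix p n ℝ} (hrank : P.rank ≤ (X * P).rank) {G : Matrix p p ℝ}
    (hAGA : X * P * Xᵀ * G * (X * P * Xᵀ) = X * P * Xᵀ) (y : n → ℝ) :
    (X *ᵥ (P *ᵥ y)) ⬝ᵥ (G *ᵥ (X *ᵥ (P *ᵥ y))) = y ⬝ᵥ (P *ᵥ y) := by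
  have hrank' : P.rank ≤ (P * Xᵀ).rank := by
    rwa [← rank_transpose (P * Xᵀ), transpose_mul, transpose_transpose, hP]
  obtain ⟨z, hz⟩ : P *ᵥ y ∈ LinearMap.range (P * Xᵀ).mulVecLin := by
    rw [range_mulVecLin_mul_eq_of_rank_le hrank']
    exact LinearMap.mem_range_self _ y
  rw [mulVecLin_apply, ← mulVec_mulVec] at hz
  have hA : (X * P * Xᵀ)ᵀ = X * P * Xᵀ := by
    rw [transpose_mul, transpose_mul, transpose_transpose, hP, Matrix.mul_assoc]
  have hXPy : X *ᵥ (P *ᵥ y) = (X * P * Xᵀ) *ᵥ z := by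
    rw [← hz, mulVec_mulVec, mulVec_mulVec, Matrix.mul_assoc]
  calc (X *ᵥ (P *ᵥ y)) ⬝ᵥ (G *ᵥ (X *ᵥ (P *ᵥ y)))
      = (z ᵥ* (X * P * Xᵀ)) ⬝ᵥ (G *ᵥ ((X * P * Xᵀ) *ᵥ z)) := by
        rw [hXPy, ← vecMul_transpose, hA]
    _ = z ⬝ᵥ ((X * P * Xᵀ) *ᵥ z) := dotProduct_mulVec_mul_mul_self hAGA z
    _ = (P *ᵥ (Xᵀ *ᵥ z)) ⬝ᵥ (Xᵀ *ᵥ z) := by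
        rw [← mulVec_mulVec, ← mulVec_mulVec, dotProduct_mulVec z X, ← mulVec_transpose,
          dotProduct_comm]
    _ = y ⬝ᵥ (P *ᵥ y) := by
        rw [← hz, dotProduct_mulVec y P, ← mulVec_transpose, hP, hz]

end Matrix

theorem centeringProj_transpose (n : ℕ) : (centeringProj n)ᵀ = centeringProj n := by
  ext i j
  simp [centeringProj, vecMulVec_apply, one_apply, eq_comm]

theorem centeringProj_mulVec_one {n : ℕ} (hn : 0 < n) :
    centeringProj n *ᵥ (fun _ ↦ 1) = 0 := by
  ext i
  simp [centeringProj, mulVec, dotProduct, vecMulVec_apply, one_apply, hn.ne']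

theorem rank_centeringProj_le {n : ℕ} (hn : 0 < n) : (centeringProj n).rank ≤ n - 1 := by
  simpa using rank_le_card_sub_one_of_mulVec_eq_zero (Function.ne_iff.mpr ⟨⟨0, hn⟩, one_ne_zero⟩)
    (centeringProj_mulVec_one hn)

theorem stmt15_general {n p : ℕ} (hn : 0 < n)
    (X : Matrix (Fin p) (Fin n) ℝ) (y : Fin n → ℝ)
    (hrank : (X * centeringProj n).rank = n - 1)
    (hy : y ⬝ᵥ (centeringProj n *ᵥ y) ≠ 0)
    (G : Matrix (Fin p) (Fin p) ℝ)
    (hMP1 : (X * centeringProj n * Xᵀ) * G * (X * centeringProj n * Xᵀ) =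
      X * centeringProj n * Xᵀ) :
    (X *ᵥ (centeringProj n *ᵥ y)) ⬝ᵥ (G *ᵥ (X *ᵥ (centeringProj n *ᵥ y))) /
        (y ⬝ᵥ (centeringProj n *ᵥ y)) = 1 := by
  rw [dotProduct_mulVec_generalizedInverse_eq (centeringProj_transpose n)
    (hrank ▸ rank_centeringProj_le hn) hMP1, div_self hy]

/-- degeneracy of the pseudoinverse-based `R²` when `p > n`.
Let `X ∈ ℝ^{p×n}`, `y ∈ ℝ^n`, `P₁` the centering projection.  If
`rank(X P₁) = n − 1` and `yᵀP₁y ≠ 0`, then for any matrix `G` satisfying the four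
Moore–Penrose conditions for `A = X P₁ Xᵀ`, the coefficient of determination
degenerates: `yᵀP₁Xᵀ G X P₁ y / (yᵀP₁y) = 1`. -/
theorem stmt15 {n p : ℕ} (hn : 0 < n) (hp : 0 < p)
    (X : Matrix (Fin p) (Fin n) ℝ) (y : Fin n → ℝ)
    (hrank : (X * centeringProj n).rank = n - 1)
    (hy : y ⬝ᵥ (centeringProj n *ᵥ y) ≠ 0)
    (G : Matrix (Fin p) (Fin p) ℝ)
    (hMP1 : (X * centeringProj n * Xᵀ) * G * (X * centeringProj n * Xᵀ) =
      X * centeringProj n * Xᵀ)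
    (hMP2 : G * (X * centeringProj n * Xᵀ) * G = G)
    (hMP3 : ((X * centeringProj n * Xᵀ) * G)ᵀ = (X * centeringProj n * Xᵀ) * G)
    (hMP4 : (G * (X * centeringProj n * Xᵀ))ᵀ = G * (X * centeringProj n * Xᵀ)) :
    (X *ᵥ (centeringProj n *ᵥ y)) ⬝ᵥ (G *ᵥ (X *ᵥ (centeringProj n *ᵥ y))) /
        (y ⬝ᵥ (centeringProj n *ᵥ y)) = 1 :=
  stmt15_general hn X y hrank hy G hMP1
end
end
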